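/- arXiv:1109.6381 — 2 statements merged into one kernel-verified Lean document; each statement's English description precedes it below -/
import Mathlib

section
/- For the bilinear site-wise selected-class likelihood p_sel(η, γ) = T + U·η + V·γ + W·η·γ and total likelihood P(η,γ,ρ) = ρ·p_sel(η,γ) + (1−ρ)·p_neut, the mixed partial derivative ∂²(ln P)/∂η∂γ equals (W·p_neut·ρ(1−ρ) + ρ²(T·W − U·V)) / P², wherever P > 0. -/
/-!
Both `P` and `ln P` are viewed through the bilinear form `a + b η + c γ + d η γ` with
`a = ρ T + (1 - ρ) p_neut`, `b = ρ U`, `c = ρ V`, `d = ρ W`. For such an `f`,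
`∂_γ ln f = (c + d η) / f`, and differentiating this quotient in `η` gives
`∂²_{ηγ} ln f = (d f - (b + d γ)(c + d η)) / f²`; substituting the coefficients, the terms
in `η` and `γ` cancel in the numerator, leaving `W p_neut ρ (1 - ρ) + ρ² (T W - U V)`.
-/

open Real Filter Topology

section Bilinear

variable (a b c d : ℝ)

theorem hasDerivAt_bilinear_right (x y : ℝ) :
    HasDerivAt (fun y => a + b * x + c * y + d * x * y) (c + d * x) y := by
  have h := ((hasDerivAt_id' y).const_mul (c + d * x)).const_add (a + b * x)
  rw [mul_one] at h
  exact h.congr_of_eventuallyEq (.of_forall fun _ => by ring)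

theorem hasDerivAt_bilinear_left (x y : ℝ) :
    HasDerivAt (fun x => a + b * x + c * y + d * x * y) (b + d * y) x := by
  have h := ((hasDerivAt_id' x).const_mul (b + d * y)).const_add (a + c * y)
  rw [mul_one] at h
  exact h.congr_of_eventuallyEq (.of_forall fun _ => by ring)

theorem deriv_log_bilinear_right (x y : ℝ) (h : a + b * x + c * y + d * x * y ≠ 0) :
    deriv (fun y => log (a + b * x + c * y + d * x * y)) y
      = (c + d * x) / (a + b * x + c * y + d * x * y) :=
  ((hasDerivAt_bilinear_right a b c d x y).log h).deriv

theorem deriv_deriv_log_bilinear (x₀ y₀ : ℝ) (h : a + b * x₀ + c * y₀ + d * x₀ * y₀ ≠ 0) :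
    deriv (fun x => deriv (fun y => log (a + b * x + c * y + d * x * y)) y₀) x₀
      = (d * (a + b * x₀ + c * y₀ + d * x₀ * y₀) - (b + d * y₀) * (c + d * x₀))
        / (a + b * x₀ + c * y₀ + d * x₀ * y₀) ^ 2 := by
  have hne : ∀ᶠ x in 𝓝 x₀, a + b * x + c * y₀ + d * x * y₀ ≠ 0 :=
    (hasDerivAt_bilinear_left a b c d x₀ y₀).continuousAt.eventually_ne h
  have hquotient : deriv (fun x => deriv (fun y => log (a + b * x + c * y + d * x * y)) y₀) x₀
      = deriv (fun x => (c + d * x) / (a + b * x + c * y₀ + d * x * y₀)) x₀ :=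
    EventuallyEq.deriv_eq (hne.mono fun x hx => deriv_log_bilinear_right a b c d x y₀ hx)
  rw [hquotient, (((hasDerivAt_id' x₀).const_mul d).const_add c |>.fun_div
    (hasDerivAt_bilinear_left a b c d x₀ y₀) h).deriv]
  ring

end Bilinear

theorem hessian_mixed_partial_general (T U V W pn ρ : ℝ)
    (η₀ γ₀ : ℝ)
    (hP : 0 < ρ * (T + U * η₀ + V * γ₀ + W * η₀ * γ₀) + (1 - ρ) * pn) :
    deriv (fun η => deriv (fun γ =>
        Real.log (ρ * (T + U * η + V * γ + W * η * γ) + (1 - ρ) * pn)) γ₀) η₀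
      = (W * pn * ρ * (1 - ρ) + ρ ^ 2 * (T * W - U * V))
        / (ρ * (T + U * η₀ + V * γ₀ + W * η₀ * γ₀) + (1 - ρ) * pn) ^ 2 := by
  have hbilinear : ∀ η γ, ρ * (T + U * η + V * γ + W * η * γ) + (1 - ρ) * pn
      = (ρ * T + (1 - ρ) * pn) + ρ * U * η + ρ * V * γ + ρ * W * η * γ := fun _ _ => by ring
  simp only [hbilinear]
  rw [deriv_deriv_log_bilinear _ _ _ _ _ _ (hbilinear η₀ γ₀ ▸ hP.ne')]
  congr 1
  ring

/-- for the bilinear site-wise selected-class likelihood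
`p_sel(η,γ) = T + U·η + V·γ + W·η·γ` and total likelihood
`P(η,γ) = ρ·p_sel(η,γ) + (1−ρ)·p_neut`, the mixed partial derivative
`∂²(ln P)/∂η∂γ` equals
`(W·p_neut·ρ(1−ρ) + ρ²(T·W − U·V)) / P²` wherever `P > 0`. -/
theorem hessian_mixed_partial (T U V W pn ρ : ℝ)
    (hρ0 : 0 ≤ ρ) (hρ1 : ρ ≤ 1) (η₀ γ₀ : ℝ)
    (hP : 0 < ρ * (T + U * η₀ + V * γ₀ + W * η₀ * γ₀) + (1 - ρ) * pn) :
    deriv (fun η => deriv (fun γ =>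
        Real.log (ρ * (T + U * η + V * γ + W * η * γ) + (1 - ρ) * pn)) γ₀) η₀
      = (W * pn * ρ * (1 - ρ) + ρ ^ 2 * (T * W - U * V))
        / (ρ * (T + U * η₀ + V * γ₀ + W * η₀ * γ₀) + (1 - ρ) * pn) ^ 2 :=
  hessian_mixed_partial_general T U V W pn ρ η₀ γ₀ hP
end

section
/- For the polymorphism-based estimator ρ̂_Poly = 1 − (P_E·|F|)/(|E|·P_F): if neutral sites are polymorphic with probability p and selected sites (a fraction ρ of element sites) are polymorphic with probability γ·p for some γ ∈ [0,1], then the estimator applied to the expected counts equals ρ(1 − γ). Hence ρ̂_Poly ≤ ρ with equality iff γ = 0 or ρ = 0, quantifying the downward bias of ρ̂_Poly under weak negative selection (γ > 0). -/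
/-!
On expected counts `ρ̂_Poly = 1 − (P_E/|E|)/(P_F/|F|)` compares the polymorphism rates
`p (1 − ρ + ρ γ)` of the element and `p` of the flanks, so `p`, `|E|` and `|F|` cancel and
`ρ̂_Poly = ρ (1 − γ)`: selected sites still polymorphic at rate `γ p` pass for neutral ones,
which lowers the estimate by `ρ γ`.
-/

/-- `ρ̂_Poly`, with `nE = |E|` and `nF = |F|` the numbers of element and flanking sites. -/
noncomputable def rhoPoly (PE PF nE nF : ℝ) : ℝ := 1 - PE * nF / (nE * PF)

theorem rhoPoly_expected_counts {p ρ γ nE nF : ℝ} (hp : p ≠ 0) (hnE : nE ≠ 0) (hnF : nF ≠ 0) :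
    rhoPoly (nE * ((1 - ρ) * p + ρ * (γ * p))) (nF * p) nE nF = ρ * (1 - γ) := by
  unfold rhoPoly
  field_simp
  ring

theorem mul_one_sub_le_self {ρ γ : ℝ} (hρ : 0 ≤ ρ) (hγ : 0 ≤ γ) : ρ * (1 - γ) ≤ ρ :=
  mul_le_of_le_one_right hρ (by linarith)

theorem mul_one_sub_eq_self_iff {ρ γ : ℝ} : ρ * (1 - γ) = ρ ↔ γ = 0 ∨ ρ = 0 := by
  rw [mul_right_eq_self₀, sub_eq_self]

theorem rho_poly_estimator_general (p ρ γ nE nF : ℝ)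
    (hp : 0 < p) (hρ0 : 0 ≤ ρ) (hγ0 : 0 ≤ γ)
    (hnE : 0 < nE) (hnF : 0 < nF)
    (PE PF : ℝ) (hPE : PE = nE * ((1 - ρ) * p + ρ * (γ * p)))
    (hPF : PF = nF * p) :
    1 - PE * nF / (nE * PF) = ρ * (1 - γ) ∧
    1 - PE * nF / (nE * PF) ≤ ρ ∧
    (1 - PE * nF / (nE * PF) = ρ ↔ γ = 0 ∨ ρ = 0) := by
  have hbias : rhoPoly PE PF nE nF = ρ * (1 - γ) := by
    subst hPE hPF
    exact rhoPoly_expected_counts hp.ne' hnE.ne' hnF.ne'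
  unfold rhoPoly at hbias
  rw [hbias]
  exact ⟨rfl, mul_one_sub_le_self hρ0 hγ0, mul_one_sub_eq_self_iff⟩

/-- the polymorphism-based estimator
`ρ̂_Poly = 1 − (P_E·|F|)/(|E|·P_F)` applied to expected counts: if neutral
sites are polymorphic with probability `p > 0` and selected sites (a fraction
`ρ ∈ [0,1]` of element sites) with probability `γ·p`, `γ ∈ [0,1]`, then
`ρ̂_Poly = ρ(1 − γ)`; hence `ρ̂_Poly ≤ ρ`, with equality iff `γ = 0` or
`ρ = 0`. -/
theorem rho_poly_estimator (p ρ γ nE nF : ℝ)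
    (hp : 0 < p) (hρ0 : 0 ≤ ρ) (hρ1 : ρ ≤ 1) (hγ0 : 0 ≤ γ) (hγ1 : γ ≤ 1)
    (hnE : 0 < nE) (hnF : 0 < nF)
    (PE PF : ℝ) (hPE : PE = nE * ((1 - ρ) * p + ρ * (γ * p)))
    (hPF : PF = nF * p) :
    1 - PE * nF / (nE * PF) = ρ * (1 - γ) ∧
    1 - PE * nF / (nE * PF) ≤ ρ ∧
    (1 - PE * nF / (nE * PF) = ρ ↔ γ = 0 ∨ ρ = 0) :=
  rho_poly_estimator_general p ρ γ nE nF hp hρ0 hγ0 hnE hnF PE PF hPE hPF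
end
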